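/- Let n ≥ 2, 0 < γ < n, a ≥ 0, p > 0, μ ∈ ℝ and c > 0. Let v : ℝⁿ → [0,∞) be measurable with v(y) ≥ c·|y|^{−μ} for all |y| ≥ 1, and suppose u(x) := R_{γ,n} ∫_{ℝⁿ} |y|^a v(y)^p |x−y|^{γ−n} dy is finite for all x ∈ ℝⁿ. Then there exists C > 0 such that u(x) ≥ C·|x|^{−(pμ − a − γ)} for all |x| ≥ 1. -/

import Mathlib

open MeasureTheory Metric Set

/-- Spherical average of `w` over the sphere of radius `r` centered at the origin,
with respect to the `(n-1)`-dimensional (Hausdorff) surface measure. -/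
noncomputable def sphAvg (n : ℕ) (w : EuclideanSpace ℝ (Fin n) → ℝ) (r : ℝ) : ℝ :=
  ⨍ x in sphere (0 : EuclideanSpace ℝ (Fin n)) r, w x ∂(μH[(n : ℝ) - 1])
/-- The Riesz potential constant `R_{s,n}`. -/
noncomputable def Rconst (n : ℕ) (s : ℝ) : ℝ :=
  Real.Gamma (((n : ℝ) - s) / 2) / (Real.pi ^ ((n : ℝ) / 2) * 2 ^ s * Real.Gamma (s / 2))

/-- The bootstrap step of the scaling-spheres argument: if `v(y) ≥ c |y|^{-μ}` for
`|y| ≥ 1`, then the Riesz potential `u(x) = R_{γ,n} ∫ |y|^a v(y)^p |x-y|^{γ-n} dy`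
satisfies `u(x) ≥ C |x|^{-(pμ - a - γ)}` for `|x| ≥ 1`. -/
theorem riesz_potential_bootstrap (n : ℕ) (hn : 2 ≤ n) (γ a p mu c : ℝ)
    (hγ1 : 0 < γ) (hγ2 : γ < n) (ha : 0 ≤ a) (hp : 0 < p) (hc : 0 < c)
    (v : EuclideanSpace ℝ (Fin n) → ℝ) (hv : Measurable v) (hv0 : ∀ y, 0 ≤ v y)
    (hvlb : ∀ y : EuclideanSpace ℝ (Fin n), 1 ≤ ‖y‖ → c * ‖y‖ ^ (-mu) ≤ v y)
    (hint : ∀ x : EuclideanSpace ℝ (Fin n),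
      Integrable (fun y => ‖y‖ ^ a * v y ^ p * ‖x - y‖ ^ (γ - (n : ℝ)))) :
    ∃ C > (0 : ℝ), ∀ x : EuclideanSpace ℝ (Fin n), 1 ≤ ‖x‖ →
      C * ‖x‖ ^ (-(p * mu - a - γ)) ≤
        Rconst n γ * ∫ y, ‖y‖ ^ a * v y ^ p * ‖x - y‖ ^ (γ - (n : ℝ)) := by
  -- positivity of the Riesz constant
  have hRc : 0 < Rconst n γ := by
    apply div_pos (Real.Gamma_pos_of_pos (by linarith))
    exact mul_pos (mul_pos (Real.rpow_pos_of_pos Real.pi_pos _)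
      (Real.rpow_pos_of_pos two_pos _)) (Real.Gamma_pos_of_pos (by linarith))
  set s : ℝ := -mu * p with hs_def
  set m : ℝ := min ((2:ℝ) ^ s) ((4:ℝ) ^ s) with hm_def
  have hm : 0 < m := lt_min (Real.rpow_pos_of_pos two_pos _) (Real.rpow_pos_of_pos (by norm_num) _)
  set V : ℝ := (volume (ball (0 : EuclideanSpace ℝ (Fin n)) 1)).toReal with hV_def
  have hVpos : 0 < V := by
    refine ENNReal.toReal_pos (ne_of_gt (measure_ball_pos _ _ one_pos)) ?_
    exact measure_ball_lt_top.ne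
  refine ⟨Rconst n γ * ((2:ℝ) ^ a * c ^ p * m * (5:ℝ) ^ (γ - (n:ℝ)) * V), ?_, ?_⟩
  · apply mul_pos hRc
    have := Real.rpow_pos_of_pos (show (0:ℝ) < 2 by norm_num) a
    have := Real.rpow_pos_of_pos hc p
    have := Real.rpow_pos_of_pos (show (0:ℝ) < 5 by norm_num) (γ - (n:ℝ))
    positivity
  intro x hx
  set R : ℝ := ‖x‖ with hR_def
  have hR : 0 < R := lt_of_lt_of_le one_pos hx
  set A : Set (EuclideanSpace ℝ (Fin n)) := closedBall ((3:ℝ) • x) R with hA_def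
  set L : ℝ := ((2:ℝ) ^ a * R ^ a) * (c ^ p * (m * R ^ s)) * ((5:ℝ) ^ (γ - (n:ℝ)) * R ^ (γ - (n:ℝ))) with hL_def
  -- pointwise lower bound on A
  have key : ∀ y ∈ A, L ≤ ‖y‖ ^ a * v y ^ p * ‖x - y‖ ^ (γ - (n:ℝ)) := by
    intro y hy
    have hdist : ‖y - (3:ℝ) • x‖ ≤ R := by
      have := mem_closedBall_iff_norm.mp hy
      simpa using this
    have h3x : ‖(3:ℝ) • x‖ = 3 * R := by
      rw [norm_smul]; simp [hR_def, abs_of_nonneg (by norm_num : (0:ℝ) ≤ 3)]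
    have hylb : 2 * R ≤ ‖y‖ := by
      have := norm_sub_norm_le ((3:ℝ) • x) y
      rw [h3x] at this
      have h' : ‖(3:ℝ) • x - y‖ ≤ R := by rwa [norm_sub_rev] at hdist
      linarith
    have hyub : ‖y‖ ≤ 4 * R := by
      calc ‖y‖ = ‖(y - (3:ℝ) • x) + (3:ℝ) • x‖ := by rw [sub_add_cancel]
        _ ≤ ‖y - (3:ℝ) • x‖ + ‖(3:ℝ) • x‖ := norm_add_le _ _
        _ ≤ R + 3 * R := by rw [h3x]; linarith
        _ = 4 * R := by ring
    have hy1 : 1 ≤ ‖y‖ := by linarith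
    have hxyub : ‖x - y‖ ≤ 5 * R := by
      calc ‖x - y‖ ≤ ‖x‖ + ‖y‖ := norm_sub_le _ _
        _ ≤ R + 4 * R := by rw [← hR_def]; linarith
        _ = 5 * R := by ring
    have hxylb : 0 < ‖x - y‖ := by
      have := norm_sub_norm_le y x
      rw [← hR_def, norm_sub_rev] at this
      linarith
    -- term 1
    have t1 : (2:ℝ) ^ a * R ^ a ≤ ‖y‖ ^ a := by
      rw [← Real.mul_rpow (by norm_num) hR.le]
      exact Real.rpow_le_rpow (by positivity) hylb ha
    -- term 2
    have t2 : c ^ p * (m * R ^ s) ≤ v y ^ p := by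
      have hvy : c * ‖y‖ ^ (-mu) ≤ v y := hvlb y hy1
      have hys : m * R ^ s ≤ ‖y‖ ^ s := by
        rcases le_or_gt 0 s with hsn | hsn
        · calc m * R ^ s ≤ (2:ℝ) ^ s * R ^ s :=
                mul_le_mul_of_nonneg_right (min_le_left _ _) (Real.rpow_nonneg hR.le _)
            _ = (2 * R) ^ s := (Real.mul_rpow (by norm_num) hR.le).symm
            _ ≤ ‖y‖ ^ s := Real.rpow_le_rpow (by positivity) hylb hsn
        · calc m * R ^ s ≤ (4:ℝ) ^ s * R ^ s :=
                mul_le_mul_of_nonneg_right (min_le_right _ _) (Real.rpow_nonneg hR.le _)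
            _ = (4 * R) ^ s := (Real.mul_rpow (by norm_num) hR.le).symm
            _ ≤ ‖y‖ ^ s := Real.rpow_le_rpow_of_nonpos (by positivity) hyub hsn.le
      calc c ^ p * (m * R ^ s) ≤ c ^ p * ‖y‖ ^ s :=
            mul_le_mul_of_nonneg_left hys (Real.rpow_nonneg hc.le _)
        _ = (c * ‖y‖ ^ (-mu)) ^ p := by
            rw [Real.mul_rpow hc.le (Real.rpow_nonneg (norm_nonneg y) _),
              ← Real.rpow_mul (norm_nonneg y)]
        _ ≤ v y ^ p := Real.rpow_le_rpow (by positivity) hvy hp.le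
    -- term 3
    have t3 : (5:ℝ) ^ (γ - (n:ℝ)) * R ^ (γ - (n:ℝ)) ≤ ‖x - y‖ ^ (γ - (n:ℝ)) := by
      rw [← Real.mul_rpow (by norm_num) hR.le]
      exact Real.rpow_le_rpow_of_nonpos hxylb hxyub (by
        have : (2:ℝ) ≤ (n:ℝ) := by exact_mod_cast hn
        linarith)
    have hnn1 : (0:ℝ) ≤ (2:ℝ) ^ a * R ^ a := by positivity
    have hnn2 : (0:ℝ) ≤ c ^ p * (m * R ^ s) := by positivity
    have hnn3 : (0:ℝ) ≤ (5:ℝ) ^ (γ - (n:ℝ)) * R ^ (γ - (n:ℝ)) := by positivity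
    calc L ≤ (‖y‖ ^ a * v y ^ p) * ((5:ℝ) ^ (γ - (n:ℝ)) * R ^ (γ - (n:ℝ))) := by
          refine mul_le_mul (mul_le_mul t1 t2 hnn2 (Real.rpow_nonneg (norm_nonneg y) a)) le_rfl hnn3 ?_
          exact mul_nonneg (Real.rpow_nonneg (norm_nonneg y) a) (Real.rpow_nonneg (hv0 y) p)
      _ ≤ ‖y‖ ^ a * v y ^ p * ‖x - y‖ ^ (γ - (n:ℝ)) := by
          exact mul_le_mul_of_nonneg_left t3
            (mul_nonneg (Real.rpow_nonneg (norm_nonneg y) a) (Real.rpow_nonneg (hv0 y) p))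
  -- measure of A
  have hAmeas : (volume A).toReal = R ^ (n:ℝ) * V := by
    rw [hA_def, Measure.addHaar_closedBall volume _ hR.le]
    rw [ENNReal.toReal_mul, ENNReal.toReal_ofReal (pow_nonneg hR.le _)]
    rw [finrank_euclideanSpace_fin, ← Real.rpow_natCast R n]
  have hAfin : volume A ≠ ⊤ := measure_closedBall_lt_top.ne
  -- integral lower bound
  have step1 : L * (R ^ (n:ℝ) * V) ≤ ∫ y in A, ‖y‖ ^ a * v y ^ p * ‖x - y‖ ^ (γ - (n:ℝ)) := by
    rw [← hAmeas]
    exact setIntegral_ge_of_const_le_real measurableSet_closedBall hAfin key ((hint x).integrableOn)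
  have step2 : (∫ y in A, ‖y‖ ^ a * v y ^ p * ‖x - y‖ ^ (γ - (n:ℝ)))
      ≤ ∫ y, ‖y‖ ^ a * v y ^ p * ‖x - y‖ ^ (γ - (n:ℝ)) := by
    refine setIntegral_le_integral (hint x) (Filter.Eventually.of_forall fun y => ?_)
    exact mul_nonneg (mul_nonneg (Real.rpow_nonneg (norm_nonneg y) a)
      (Real.rpow_nonneg (hv0 y) p)) (Real.rpow_nonneg (norm_nonneg (x - y)) _)
  -- final algebra
  have halg : Rconst n γ * ((2:ℝ) ^ a * c ^ p * m * (5:ℝ) ^ (γ - (n:ℝ)) * V) * R ^ (-(p * mu - a - γ))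
      = Rconst n γ * (L * (R ^ (n:ℝ) * V)) := by
    have hexp : -(p * mu - a - γ) = a + s + ((γ - (n:ℝ)) + (n:ℝ)) := by
      rw [hs_def]; ring
    rw [hexp, Real.rpow_add hR, Real.rpow_add hR, Real.rpow_add hR, hL_def]
    ring
  rw [hR_def] at halg ⊢
  rw [halg]
  exact mul_le_mul_of_nonneg_left (step1.trans step2) hRc.le
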